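/- Suppose m = p^i·q^j where p < q are primes, i is a positive integer, and j ≥ 2. Then property P₂ fails for m: there exists a squarefree reducible polynomial f ∈ 𝔽₂[X] of degree m with o(f) = m. -/

import Mathlib

/-!
Write `m = p * q * E` with `E = p ^ (i - 1) * q ^ (j - 1)` and choose `a ≥ 1`, `c` with
`a * p + c + q = p * q` (possible because `p ∤ q`). Take for `f` the product of `a` monic
irreducibles of degree `p * E`, `c` of degree `E` and one of degree `q * E`. Its degree is
`(a * p + c + q) * E = m`, and since an irreducible `g` divides `X ^ 2 ^ n - X` iff `deg g ∣ n`,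
its order is `lcm (p * E) (q * E) = m`.

Because `j ≥ 2` we have `E ≥ q`, so all three degrees are at least `3`, and there are enough
irreducibles of each degree `d`: an element of `𝔽_{2^d}` of smaller degree lies in a subfield
`𝔽_{2^(d/r)}` for one of the at most two prime factors `r` of `d`, which leaves at least
`2 ^ d - 2 * 2 ^ (d / 2)` elements of degree `d`, hence at least a `1 / d` fraction of that
many irreducibles of degree `d`.
-/

open Polynomial Module Finset

theorem Nat.exists_mul_add_add_eq_mul {p q : ℕ} (hp : 1 < p) (hpq : p < q) (hdvd : ¬p ∣ q) :
    ∃ a c, 0 < a ∧ a < q ∧ c < p ∧ a * p + c + q = p * q := by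
  have hr : q % p ≠ 0 := fun h ↦ hdvd (Nat.dvd_of_mod_eq_zero h)
  have hrp := Nat.mod_lt q (show 0 < p by omega)
  have hs : 0 < q / p := Nat.div_pos hpq.le (by omega)
  have h2s : 2 * (q / p) ≤ q := (Nat.mul_le_mul_right _ hp).trans (Nat.mul_div_le q p)
  have hqr := Nat.div_add_mod q p
  refine ⟨q - 1 - q / p, p - q % p, by omega, by omega, by omega, ?_⟩
  obtain ⟨a, ha⟩ : ∃ a, q = a + 1 + q / p := ⟨q - 1 - q / p, by omega⟩
  obtain ⟨c, hc⟩ : ∃ c, p = c + q % p := ⟨p - q % p, by omega⟩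
  rw [show q - 1 - q / p = a by omega, show p - q % p = c by omega]
  nlinarith

theorem Nat.exists_mem_primeFactors_dvd_div {d e : ℕ} (hd : d ≠ 0) (he : e ∣ d)
    (hne : e ≠ d) : ∃ r ∈ d.primeFactors, e ∣ d / r := by
  obtain ⟨k, rfl⟩ := he
  have hk : k ≠ 1 := by rintro rfl; simp at hne
  refine ⟨k.minFac, Nat.mem_primeFactors.mpr
    ⟨Nat.minFac_prime hk, dvd_mul_of_dvd_right (Nat.minFac_dvd k) e, hd⟩, ?_⟩
  rw [Nat.mul_div_assoc e (Nat.minFac_dvd k)]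
  exact dvd_mul_right e _

theorem Nat.card_primeFactors_le_two_of_dvd_pow_mul_pow {p q i j d : ℕ} (hp : p.Prime)
    (hq : q.Prime) (hd : d ∣ p ^ i * q ^ j) : #d.primeFactors ≤ 2 := by
  refine (card_le_card fun r hr ↦ ?_).trans (card_le_two (a := p) (b := q))
  have hr' := Nat.prime_of_mem_primeFactors hr
  rcases (Nat.Prime.dvd_mul hr').mp ((Nat.dvd_of_mem_primeFactors hr).trans hd) with h | h
  · simp [(Nat.prime_dvd_prime_iff_eq hr' hp).mp (hr'.dvd_of_dvd_pow h)]
  · simp [(Nat.prime_dvd_prime_iff_eq hr' hq).mp (hr'.dvd_of_dvd_pow h)]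

theorem Nat.sum_primeFactors_pow_div_le (Q d : ℕ) (hQ : 0 < Q) :
    ∑ r ∈ d.primeFactors, Q ^ (d / r) ≤ #d.primeFactors * Q ^ (d / 2) :=
  sum_le_card_nsmul _ _ _ fun _ hr ↦ Nat.pow_le_pow_right hQ
    (Nat.div_le_div_left (Nat.prime_of_mem_primeFactors hr).two_le two_pos)

theorem Nat.mul_sub_two_le_two_pow_sub_one (d : ℕ) : d * (d - 2) ≤ 2 ^ (d - 1) := by
  induction d with
  | zero => simp
  | succ n ih =>
    rcases Nat.lt_or_ge n 4 with h | h
    · interval_cases n <;> simp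
    · obtain ⟨k, rfl⟩ := Nat.exists_eq_add_of_le' h
      rw [show k + 4 - 2 = k + 2 by omega, show k + 4 - 1 = k + 3 by omega] at ih
      rw [show k + 4 + 1 - 2 = k + 3 by omega, show k + 4 + 1 - 1 = k + 3 + 1 by omega, pow_succ]
      nlinarith

theorem Nat.mul_add_sum_primeFactors_two_pow_le {d L : ℕ} (hcard : #d.primeFactors ≤ 2)
    (hd : 3 ≤ d) (hL : L ≤ d - 2) :
    L * d + ∑ r ∈ d.primeFactors, 2 ^ (d / r) ≤ 2 ^ d := by
  have hsum : ∑ r ∈ d.primeFactors, 2 ^ (d / r) ≤ 2 ^ (d / 2 + 1) := by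
    rw [pow_succ']
    exact (Nat.sum_primeFactors_pow_div_le 2 d two_pos).trans (Nat.mul_le_mul_right _ hcard)
  have hLd : L * d ≤ 2 ^ (d - 1) := (Nat.mul_le_mul_right d hL).trans
    ((mul_comm _ _).le.trans (Nat.mul_sub_two_le_two_pow_sub_one d))
  have hhalf : 2 ^ (d / 2 + 1) ≤ 2 ^ (d - 1) := Nat.pow_le_pow_right two_pos (by omega)
  have hd' : 2 ^ d = 2 ^ (d - 1) + 2 ^ (d - 1) := by
    rw [← two_mul, ← pow_succ']; congr 1; omega
  omega

theorem not_irreducible_prod {ι M : Type*} [CommMonoid M] {s : Finset ι} {f : ι → M}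
    (hs : 1 < #s) (hf : ∀ i ∈ s, ¬IsUnit (f i)) : ¬Irreducible (∏ i ∈ s, f i) := by
  classical
  obtain ⟨i, hi, j, hj, hij⟩ := one_lt_card.mp hs
  rw [← mul_prod_erase s f hi]
  refine fun h ↦ (h.isUnit_or_isUnit rfl).elim (hf i hi) fun hu ↦ hf j hj ?_
  exact isUnit_of_dvd_unit (dvd_prod_of_mem f (mem_erase.mpr ⟨hij.symm, hj⟩)) hu

namespace Polynomial

variable {K : Type*} [Field K]

theorem isCoprime_of_monic_irreducible {g h : K[X]} (hg : g.Monic ∧ Irreducible g)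
    (hh : h.Monic ∧ Irreducible h) (hgh : g ≠ h) : IsCoprime g h :=
  (hg.2.coprime_iff_not_dvd).mpr fun hdvd ↦
    hgh (eq_of_monic_of_associated hg.1 hh.1 (hg.2.associated_of_dvd hh.2 hdvd))

theorem squarefree_prod_of_monic_irreducible {T : Finset K[X]}
    (hT : ∀ g ∈ T, g.Monic ∧ Irreducible g) : Squarefree (∏ g ∈ T, g) :=
  squarefree_prod_of_pairwise_isCoprime
    (fun g hg h hh hgh ↦ (isCoprime_of_monic_irreducible (hT g hg) (hT h hh) hgh).isRelPrime)
    fun g hg ↦ (hT g hg).2.squarefree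

theorem prod_dvd_X_pow_card_pow_sub_X_iff [Finite K] {T : Finset K[X]}
    (hT : ∀ g ∈ T, g.Monic ∧ Irreducible g) (n : ℕ) :
    (∏ g ∈ T, g) ∣ X ^ Nat.card K ^ n - X ↔ ∀ g ∈ T, g.natDegree ∣ n := by
  refine ⟨fun h g hg ↦ ?_, fun h ↦ prod_dvd_of_coprime
    (fun g hg g' hg' hne ↦ isCoprime_of_monic_irreducible (hT g hg) (hT g' hg') hne)
    fun g hg ↦ (hT g hg).2.natDegree_dvd_iff_dvd_X_pow_card_pow_sub_X.mp (h g hg)⟩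
  exact (hT g hg).2.natDegree_dvd_of_dvd_X_pow_card_pow_sub_X ((dvd_prod_of_mem _ hg).trans h)

end Polynomial

theorem card_filter_pow_eq_self_le {F : Type*} [Field F] [Fintype F] [DecidableEq F] {n : ℕ}
    (hn : 1 < n) : #{x : F | x ^ n = x} ≤ n :=
  calc _ ≤ (X ^ n - X : F[X]).natDegree := card_le_degree_of_subset_roots fun x hx ↦ by
        simpa [mem_roots (FiniteField.X_pow_card_sub_X_ne_zero F hn), sub_eq_zero] using hx
    _ = n := FiniteField.X_pow_card_sub_X_natDegree_eq F hn

namespace FiniteField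

variable {K L : Type*} [Field K] [Field L] [Algebra K L]

theorem card_filter_minpoly_eq_le [FiniteDimensional K L] [DecidableEq K] (s : Finset L)
    (g : K[X]) : #{x ∈ s | minpoly K x = g} ≤ g.natDegree := by
  rw [← natDegree_map (algebraMap K L)]
  refine card_le_degree_of_subset_roots fun x hx ↦ ?_
  obtain ⟨-, rfl⟩ := mem_filter.mp hx
  exact mem_aroots.mpr ⟨minpoly.ne_zero (.of_finite K x), minpoly.aeval K x⟩

variable [Finite K]

theorem pow_card_pow_eq_self_of_natDegree_minpoly_dvd [Finite L] {x : L} {k : ℕ}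
    (h : (minpoly K x).natDegree ∣ k) : x ^ Nat.card K ^ k = x := by
  have hx : IsIntegral K x := .of_finite K x
  have := aeval_eq_zero_of_dvd_aeval_eq_zero
    ((minpoly.irreducible hx).natDegree_dvd_iff_dvd_X_pow_card_pow_sub_X.mp h) (minpoly.aeval K x)
  simpa [sub_eq_zero] using this

theorem exists_pow_card_pow_eq_self_of_natDegree_minpoly_ne [Finite L] {x : L}
    (h : (minpoly K x).natDegree ≠ finrank K L) :
    ∃ r ∈ (finrank K L).primeFactors, x ^ Nat.card K ^ (finrank K L / r) = x := by
  obtain ⟨r, hr, hdvd⟩ := Nat.exists_mem_primeFactors_dvd_div finrank_pos.ne'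
    (minpoly.degree_dvd (.of_finite K x)) h
  exact ⟨r, hr, pow_card_pow_eq_self_of_natDegree_minpoly_dvd hdvd⟩

variable (K L) in
theorem pow_finrank_le_mul_card_minpolys_add_sum [Fintype L] [DecidableEq K] [DecidableEq L] :
    Nat.card K ^ finrank K L ≤
      finrank K L * #(({x : L | (minpoly K x).natDegree = finrank K L} : Finset L).image
        (minpoly K)) + ∑ r ∈ (finrank K L).primeFactors, Nat.card K ^ (finrank K L / r) := by
  set d := finrank K L
  set G : Finset L := {x | (minpoly K x).natDegree = d}
  have hsplit : Nat.card K ^ d = #G + #{x : L | ¬(minpoly K x).natDegree = d} := by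
    rw [card_filter_add_card_filter_not, card_univ, ← Nat.card_eq_fintype_card,
      natCard_eq_pow_finrank (K := K) (V := L)]
  have hG : #G ≤ d * #(G.image (minpoly K)) := card_le_mul_card_image G d fun g hg ↦ by
    obtain ⟨x, hx, rfl⟩ := mem_image.mp hg
    exact (card_filter_minpoly_eq_le G _).trans (mem_filter.mp hx).2.le
  have hsmall : #{x : L | ¬(minpoly K x).natDegree = d} ≤
      ∑ r ∈ d.primeFactors, Nat.card K ^ (d / r) :=
    calc _ ≤ #(d.primeFactors.biUnion fun r ↦ {x : L | x ^ Nat.card K ^ (d / r) = x}) :=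
          card_le_card fun x hx ↦ by
            simpa using exists_pow_card_pow_eq_self_of_natDegree_minpoly_ne (mem_filter.mp hx).2
      _ ≤ _ := card_biUnion_le
      _ ≤ _ := sum_le_sum fun r hr ↦ card_filter_pow_eq_self_le <| Nat.one_lt_pow
          (Nat.div_pos (Nat.le_of_dvd finrank_pos (Nat.dvd_of_mem_primeFactors hr))
            (Nat.prime_of_mem_primeFactors hr).pos).ne' Finite.one_lt_card
  omega

end FiniteField

theorem exists_finset_monic_irreducible_natDegree_eq (K : Type*) [Field K] [Finite K] {d L : ℕ}
    (hd : d ≠ 0) (h : L * d + ∑ r ∈ d.primeFactors, Nat.card K ^ (d / r) ≤ Nat.card K ^ d) :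
    ∃ T : Finset K[X], #T = L ∧ (∀ g ∈ T, g.Monic ∧ Irreducible g) ∧
      ∀ g ∈ T, g.natDegree = d := by
  classical
  obtain ⟨p, _⟩ := CharP.exists K
  have : Fact p.Prime := ⟨CharP.char_is_prime K p⟩
  have : NeZero d := ⟨hd⟩
  let := Fintype.ofFinite (FiniteField.Extension K p d)
  have hcount :=
    FiniteField.pow_finrank_le_mul_card_minpolys_add_sum K (FiniteField.Extension K p d)
  rw [FiniteField.finrank_extension] at hcount
  obtain ⟨T, hTP, hT⟩ := exists_subset_card_eq
    (Nat.le_of_mul_le_mul_right (by linarith) (Nat.pos_of_ne_zero hd) :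
      L ≤ #(({x | (minpoly K x).natDegree = d} : Finset (FiniteField.Extension K p d)).image
        (minpoly K)))
  refine ⟨T, hT, fun g hg ↦ ?_, fun g hg ↦ ?_⟩ <;>
    obtain ⟨x, hx, rfl⟩ := mem_image.mp (hTP hg)
  · exact ⟨minpoly.monic (.of_finite K x), minpoly.irreducible (.of_finite K x)⟩
  · exact (mem_filter.mp hx).2

theorem exists_squarefree_not_irreducible_of_card_le {K : Type*} [Field K] [Finite K]
    {p q E a c : ℕ} (hp : 1 < p) (hq : 1 < q) (hpq : p ≠ q) (hE0 : E ≠ 0) (ha : 0 < a)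
    (hcardA : a * (p * E) + ∑ r ∈ (p * E).primeFactors, Nat.card K ^ (p * E / r) ≤
      Nat.card K ^ (p * E))
    (hcardE : c * E + ∑ r ∈ E.primeFactors, Nat.card K ^ (E / r) ≤ Nat.card K ^ E)
    (hcardD : 1 * (q * E) + ∑ r ∈ (q * E).primeFactors, Nat.card K ^ (q * E / r) ≤
      Nat.card K ^ (q * E)) :
    ∃ f : K[X], Squarefree f ∧ ¬Irreducible f ∧ f.natDegree = (a * p + c + q) * E ∧
      ∀ n, f ∣ X ^ Nat.card K ^ n - X ↔ p * E ∣ n ∧ q * E ∣ n := by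
  classical
  obtain ⟨TA, hTA, hA, hAdeg⟩ :=
    exists_finset_monic_irreducible_natDegree_eq K (by positivity) hcardA
  obtain ⟨TE, hTE, hE, hEdeg⟩ := exists_finset_monic_irreducible_natDegree_eq K hE0 hcardE
  obtain ⟨TD, hTD, hD, hDdeg⟩ :=
    exists_finset_monic_irreducible_natDegree_eq K (by positivity) hcardD
  have hdisj {S T : Finset K[X]} {d e : ℕ} (hS : ∀ g ∈ S, g.natDegree = d)
      (hT : ∀ g ∈ T, g.natDegree = e) (hde : d ≠ e) : Disjoint S T :=
    disjoint_left.mpr fun g hgS hgT ↦ hde ((hS g hgS).symm.trans (hT g hgT))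
  have hE0' := Nat.pos_of_ne_zero hE0
  have hAE : Disjoint TA TE := hdisj hAdeg hEdeg (by nlinarith)
  have hAED : Disjoint (TA ∪ TE) TD := disjoint_union_left.mpr
    ⟨hdisj hAdeg hDdeg fun h ↦ hpq (Nat.eq_of_mul_eq_mul_right hE0' h),
      hdisj hEdeg hDdeg (by nlinarith)⟩
  set T := TA ∪ TE ∪ TD
  have hT : ∀ g ∈ T, g.Monic ∧ Irreducible g := by
    simp only [T, mem_union]
    rintro g ((hg | hg) | hg)
    exacts [hA g hg, hE g hg, hD g hg]
  refine ⟨∏ g ∈ T, g, squarefree_prod_of_monic_irreducible hT,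
    not_irreducible_prod ?_ fun g hg ↦ (hT g hg).2.not_isUnit, ?_, fun n ↦ ?_⟩
  · rw [card_union_of_disjoint hAED, card_union_of_disjoint hAE]
    omega
  · rw [natDegree_prod_of_monic _ _ fun g hg ↦ (hT g hg).1, sum_union hAED, sum_union hAE,
      sum_const_nat hAdeg, sum_const_nat hEdeg, sum_const_nat hDdeg, hTA, hTE, hTD]
    ring
  rw [prod_dvd_X_pow_card_pow_sub_X_iff hT]
  obtain ⟨gA, hgA⟩ := card_pos.mp (hTA ▸ ha)
  obtain ⟨gD, hgD⟩ := card_pos.mp (hTD ▸ Nat.one_pos)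
  refine ⟨fun h ↦ ⟨hAdeg gA hgA ▸ h gA (by simp [T, hgA]),
    hDdeg gD hgD ▸ h gD (by simp [T, hgD])⟩, fun ⟨hAn, hDn⟩ g hg ↦ ?_⟩
  simp only [T, mem_union] at hg
  rcases hg with (hg | hg) | hg
  · exact hAdeg g hg ▸ hAn
  · exact hEdeg g hg ▸ (dvd_mul_left E p).trans hAn
  · exact hDdeg g hg ▸ hDn

/-- If `m = p^i * q^j` with primes `p < q`, `i ≥ 1` and `j ≥ 2`, then
property `P₂` fails for `m`: there is a squarefree reducible `f ∈ 𝔽₂[X]` of degree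
`m` whose order `o(f)` (the least positive `n` with `f ∣ X^(2^n) - X`) equals `m`. -/
theorem stmt_16 (p q i j m : ℕ) (hp : p.Prime) (hq : q.Prime) (hpq : p < q)
    (hi : 0 < i) (hj : 2 ≤ j) (hm : m = p ^ i * q ^ j) :
    ∃ f : Polynomial (ZMod 2), Squarefree f ∧ ¬Irreducible f ∧ f.natDegree = m ∧
      IsLeast {n : ℕ | 0 < n ∧ f ∣ X ^ 2 ^ n - X} m := by
  obtain ⟨a, c, ha, haq, hcp, habc⟩ := Nat.exists_mul_add_add_eq_mul hp.one_lt hpq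
    fun h ↦ hpq.ne ((Nat.prime_dvd_prime_iff_eq hp hq).mp h)
  obtain ⟨i, rfl⟩ : ∃ i', i = i' + 1 := ⟨i - 1, by omega⟩
  obtain ⟨j, rfl⟩ : ∃ j', j = j' + 2 := ⟨j - 2, by omega⟩
  set E := p ^ i * q ^ (j + 1)
  have hmE : m = p * q * E := by rw [hm]; ring
  have hqE : q ≤ E := (Nat.le_self_pow (by omega) q).trans
    (Nat.le_mul_of_pos_left _ (pow_pos hp.pos i))
  have hp2 := hp.two_le
  have hpE : 2 * E ≤ p * E := Nat.mul_le_mul_right E hp2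
  have hqE' : 2 * E ≤ q * E := Nat.mul_le_mul_right E hq.two_le
  have hcard {d L : ℕ} (hdm : d ∣ m) (hd : 3 ≤ d) (hL : L ≤ d - 2) :
      L * d + ∑ r ∈ d.primeFactors, Nat.card (ZMod 2) ^ (d / r) ≤ Nat.card (ZMod 2) ^ d := by
    rw [Nat.card_zmod]
    exact Nat.mul_add_sum_primeFactors_two_pow_le
      (Nat.card_primeFactors_le_two_of_dvd_pow_mul_pow hp hq (hm ▸ hdm)) hd hL
  obtain ⟨f, hsf, hirr, hdeg, hord⟩ := exists_squarefree_not_irreducible_of_card_le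
    (E := E) (a := a) (c := c) hp.one_lt hq.one_lt hpq.ne (by omega) ha
    (hcard ⟨q, by rw [hmE]; ring⟩ (by omega) (by omega))
    (hcard ⟨p * q, by rw [hmE]; ring⟩ (by omega) (by omega))
    (hcard ⟨p, by rw [hmE]; ring⟩ (by omega) (by omega))
  rw [Nat.card_zmod] at hord
  have hlcm (n : ℕ) : p * E ∣ n ∧ q * E ∣ n ↔ m ∣ n := by
    rw [← Nat.lcm_dvd_iff, Nat.lcm_mul_right,
      ((Nat.coprime_primes hp hq).mpr hpq.ne).lcm_eq_mul, hmE]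
  have hm0 : 0 < m := hmE ▸ Nat.mul_pos (Nat.mul_pos hp.pos hq.pos) (by omega)
  exact ⟨f, hsf, hirr, by rw [hdeg, habc, hmE], ⟨hm0, (hord m).2 ((hlcm m).2 dvd_rfl)⟩,
    fun n ⟨hn, hfn⟩ ↦ Nat.le_of_dvd hn ((hlcm n).1 ((hord n).1 hfn))⟩
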